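/- (Alternate characterization of Reality Check) For every agent π, the reality check π_RC of π satisfies: π_RC(x₁y₁...xₙ) = π(x₁y₁...xₙ) if x₁y₁...xₙ is possible for π, and π_RC(x₁y₁...xₙ) = π(⟨x₁⟩) otherwise. That is, replacing 'possible for π_RC' by 'possible for π' in the recursive definition of π_RC yields the same agent. -/

import Mathlib

/-- Alternating history x₁y₁...xₙ ending in a percept: the first percept
    together with the list of subsequent (action, percept) pairs. -/
abbrev Hist (P A : Type*) := P × List (A × P)

/-- An agent maps nonempty alternating percept-action histories
    (ending in a percept) to actions. -/
abbrev Agent (P A : Type*) := Hist P A → A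

/-- `h` is possible for `π`: for all 1 ≤ i < n, π(x₁y₁...xᵢ) = yᵢ. -/
def Possible {P A : Type*} (π : Agent P A) (h : Hist P A) : Prop :=
  ∀ i, (hi : i < h.2.length) → π (h.1, h.2.take i) = (h.2.get ⟨i, hi⟩).1

/-- Auxiliary recursion for the reality check. -/
def RCAux {P A : Type*} [DecidableEq A] (π : Agent P A) (x : P) (l : List (A × P)) : A :=
  if (∀ i, (hi : i < l.length) → RCAux π x (l.take i) = (l.get ⟨i, hi⟩).1)
  then π (x, l) else π (x, [])
termination_by l.length
decreasing_by all_goals (simp [List.length_take]; omega)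

/-- The reality check π_RC of π: π_RC(s) = π(s) if s is possible for π_RC,
    else π_RC(s) = π(⟨x₁⟩). -/
def RC {P A : Type*} [DecidableEq A] (π : Agent P A) : Agent P A :=
  fun h => RCAux π h.1 h.2

/-! Prefixes of a history possible for an agent are again possible for it. Hence, by recursion
on the length, `π_RC` agrees with `π` on every prefix of a history possible for `π`, which is
therefore possible for `π_RC`; conversely, on the prefixes of a history possible for `π_RC` the
agent `π_RC` takes the value `π`, so that history is possible for `π`. -/

section

variable {P A : Type*}

-- The same instance as the one `RCAux` uses, so that `RC_apply` holds by `rfl`.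
instance Possible.decidablePred [DecidableEq A] (π : Agent P A) : DecidablePred (Possible π) :=
  fun _ => inferInstanceAs (Decidable (∀ _, _))

lemma Possible.take {π : Agent P A} {h : Hist P A} (hp : Possible π h) (n : ℕ) :
    Possible π (h.1, h.2.take n) := by
  intro i hi
  have hin : i < n := by simp at hi; omega
  simpa [List.take_take, min_eq_left hin.le] using hp i (by simp at hi; omega)

variable [DecidableEq A] {π : Agent P A}

lemma RC_apply (π : Agent P A) (h : Hist P A) :
    RC π h = if Possible (RC π) h then π h else π (h.1, []) := by
  rw [RC, RCAux]
  rfl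

lemma Possible.of_RC {h : Hist P A} (hp : Possible (RC π) h) : Possible π h := fun i hi => by
  rw [← hp i hi, RC_apply, if_pos (hp.take i)]

lemma Possible.RC {h : Hist P A} (hp : Possible π h) : Possible (RC π) h := fun i hi => by
  rw [RC_apply, if_pos (hp.take i).RC]
  exact hp i hi
termination_by h.2.length
decreasing_by simp; omega

end

theorem realityCheck_alternate_general {P A : Type*} [DecidableEq A]
    (π : Agent P A) (h : Hist P A) :
    (Possible π h → RC π h = π h) ∧
      (¬ Possible π h → RC π h = π (h.1, [])) := by
  rw [RC_apply]
  exact ⟨fun hp => if_pos hp.RC, fun hn => if_neg (mt Possible.of_RC hn)⟩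

/-- Alternate characterization: π_RC(s) = π(s) if s is possible for π,
    and π_RC(s) = π(⟨x₁⟩) otherwise. -/
theorem realityCheck_alternate {P A : Type*} [Fintype P] [Fintype A] [DecidableEq A]
    (π : Agent P A) (h : Hist P A) :
    (Possible π h → RC π h = π h) ∧
      (¬ Possible π h → RC π h = π (h.1, [])) :=
  realityCheck_alternate_general π h
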